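/- Fix $n\ge1$, $m\ge1$, and $a\in(-1,1)$. Define constants $C_0=1$ and $C_k = -\frac{2(m-k+1)(2(m-k)+n)}{2k(2k-1+a)}C_{k-1}$ for $k=1,\dots,m$. Then the $2m$-homogeneous polynomial $h_{2m}(x,y)=\sum_{k=0}^m C_k\, y^{2k}(x_1^2+\cdots+x_n^2)^{m-k}$ satisfies $L_a h_{2m}=\Delta_x h_{2m} + \partial_{yy}h_{2m} + \frac{a}{y}\partial_y h_{2m} = 0$ for $y\ne0$, is even in $y$, and equals $1$ on the set $\{|x|=1, y=0\}$. -/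

import Mathlib

/-!
Write `h(x, y) = P(|x|², y²)` with `P(r, s) = ∑ C_k s^k r^(m-k)`. For a function of `r = |z|²`,
`z ∈ ℝ^ν`, the Laplacian is `4 r ∂²_r + 2 ν ∂_r`; the same formula with `ν = 1 + a` gives
`∂²_y + (a/y) ∂_y` in terms of `s = y²`. On `s^k r^j` this operator in `r` produces
`2 j (2 j - 2 + n) s^k r^(j-1)` and the one in `s` produces `2 k (2 k - 1 + a) s^(k-1) r^j`, so
the terms of `L_a h` pair off between neighbouring indices, and the recurrence for `C_k` is
exactly the condition that each pair cancels.
-/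

open Finset

def powSum (N : ℕ) (c : ℕ → ℝ) (e : ℕ → ℕ) (r : ℝ) : ℝ :=
  ∑ k ∈ range N, c k * r ^ e k

lemma hasDerivAt_powSum (N : ℕ) (c : ℕ → ℝ) (e : ℕ → ℕ) (r : ℝ) :
    HasDerivAt (powSum N c e) (powSum N (fun k => c k * e k) (fun k => e k - 1) r) r :=
  (HasDerivAt.fun_sum fun k _ => (hasDerivAt_pow (e k) r).const_mul (c k)).congr_deriv
    (sum_congr rfl fun k _ => by ring)

lemma powSum_radialLaplacian (N : ℕ) (c : ℕ → ℝ) (e : ℕ → ℕ) (ν r : ℝ) :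
    4 * r * powSum N (fun k => c k * e k * (e k - 1 : ℕ)) (fun k => e k - 1 - 1) r
      + 2 * ν * powSum N (fun k => c k * e k) (fun k => e k - 1) r
      = powSum N (fun k => c k * (2 * e k * (2 * e k - 2 + ν))) (fun k => e k - 1) r := by
  simp only [powSum, mul_sum, ← sum_add_distrib]
  refine sum_congr rfl fun k _ => ?_
  rcases e k with _ | _ | j
  · simp
  · simp [mul_comm]
  · simp only [Nat.add_sub_cancel]
    push_cast
    ring

lemma hasDerivAt_quadratic (b c t : ℝ) :
    HasDerivAt (fun s => s ^ 2 + b * s + c) (2 * t + b) t := by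
  simpa using ((hasDerivAt_pow 2 t).add ((hasDerivAt_id t).const_mul b)).add_const c

lemma sum_sq_add_smul_single {ι : Type*} [Fintype ι] [DecidableEq ι] (x : EuclideanSpace ℝ ι)
    (i : ι) (t : ℝ) :
    ∑ j, (x + t • EuclideanSpace.single i 1 : EuclideanSpace ℝ ι) j ^ 2
      = t ^ 2 + 2 * x i * t + ∑ j, x j ^ 2 := by
  simp only [PiLp.add_apply, PiLp.smul_apply, PiLp.single_apply, smul_eq_mul, mul_ite, mul_one,
    mul_zero, add_sq, ite_pow, ne_eq, OfNat.ofNat_ne_zero, not_false_eq_true, zero_pow,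
    sum_add_distrib, sum_ite_eq', mem_univ, ↓reduceIte]
  ring

section CompQuadratic

variable {g g' g'' : ℝ → ℝ}

lemma deriv_comp_quadratic (hg : ∀ r, HasDerivAt g (g' r) r) (b c : ℝ) :
    deriv (fun s => g (s ^ 2 + b * s + c)) = fun t => g' (t ^ 2 + b * t + c) * (2 * t + b) :=
  funext fun t => ((hg _).comp t (hasDerivAt_quadratic b c t)).deriv

lemma deriv_deriv_comp_quadratic (hg : ∀ r, HasDerivAt g (g' r) r)
    (hg' : ∀ r, HasDerivAt g' (g'' r) r) (b c t : ℝ) :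
    deriv (deriv fun s => g (s ^ 2 + b * s + c)) t
      = g'' (t ^ 2 + b * t + c) * (2 * t + b) ^ 2 + 2 * g' (t ^ 2 + b * t + c) := by
  rw [deriv_comp_quadratic hg]
  have h := ((hg' _).comp t (hasDerivAt_quadratic b c t)).mul
    (((hasDerivAt_id t).const_mul 2).add_const b)
  exact (h.congr_deriv (by simp only [Function.comp, id]; ring)).deriv

lemma sum_deriv_deriv_comp_sum_sq {ι : Type*} [Fintype ι] [DecidableEq ι]
    (hg : ∀ r, HasDerivAt g (g' r) r) (hg' : ∀ r, HasDerivAt g' (g'' r) r)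
    (x : EuclideanSpace ℝ ι) :
    ∑ i, deriv (deriv fun t : ℝ =>
        g (∑ j, (x + t • EuclideanSpace.single i 1 : EuclideanSpace ℝ ι) j ^ 2)) 0
      = 4 * (∑ j, x j ^ 2) * g'' (∑ j, x j ^ 2) + 2 * Fintype.card ι * g' (∑ j, x j ^ 2) := by
  simp only [sum_sq_add_smul_single, deriv_deriv_comp_quadratic hg hg', ne_eq,
    OfNat.ofNat_ne_zero, not_false_eq_true, zero_pow, mul_zero, zero_add, add_zero,
    mul_pow, sum_add_distrib, ← mul_sum, sum_const, card_univ, nsmul_eq_mul]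
  ring

lemma deriv_deriv_comp_sq_add_div_mul_deriv (hg : ∀ r, HasDerivAt g (g' r) r)
    (hg' : ∀ r, HasDerivAt g' (g'' r) r) (a : ℝ) {y : ℝ} (hy : y ≠ 0) :
    deriv (deriv fun t => g (t ^ 2)) y + a / y * deriv (fun t => g (t ^ 2)) y
      = 4 * y ^ 2 * g'' (y ^ 2) + 2 * (1 + a) * g' (y ^ 2) := by
  have h := deriv_deriv_comp_quadratic hg hg' 0 0 y
  have h' := congrFun (deriv_comp_quadratic hg 0 0) y
  simp only [zero_mul, add_zero] at h h'
  rw [h, h']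
  field_simp
  ring

end CompQuadratic

lemma sum_range_succ_add_sum_range_succ_eq_zero {f g : ℕ → ℝ} {m : ℕ} (hf : f m = 0)
    (hg : g 0 = 0) (h : ∀ k < m, f k + g (k + 1) = 0) :
    ∑ k ∈ range (m + 1), f k + ∑ k ∈ range (m + 1), g k = 0 := by
  rw [sum_range_succ, sum_range_succ', hf, hg, add_zero, add_zero, ← sum_add_distrib]
  exact sum_eq_zero fun k hk => h k (mem_range.mp hk)

lemma coeff_pair_cancel {n m : ℕ} {a : ℝ} (ha : -1 < a) {C : ℕ → ℝ}
    (hCk : ∀ k : ℕ, 1 ≤ k → k ≤ m →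
      C k = -((2 * ((m : ℝ) - k + 1) * (2 * ((m : ℝ) - k) + n)) /
        (2 * (k : ℝ) * (2 * (k : ℝ) - 1 + a))) * C (k - 1))
    {k : ℕ} (hk : k < m) :
    C k * (2 * (m - k : ℕ) * (2 * (m - k : ℕ) - 2 + n))
      + C (k + 1) * (2 * (k + 1 : ℕ) * (2 * (k + 1 : ℕ) - 2 + (1 + a))) = 0 := by
  have hC := hCk (k + 1) (by omega) hk
  rw [Nat.add_sub_cancel] at hC
  have hpos : (0 : ℝ) < 2 * ((k : ℝ) + 1) - 1 + a := by
    linarith [(k.cast_nonneg : (0 : ℝ) ≤ k)]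
  rw [hC, Nat.cast_sub hk.le]
  push_cast
  field_simp
  ring

theorem stmt5_general (n m : ℕ) (a : ℝ) (ha : -1 < a ∧ a < 1)
    (C : ℕ → ℝ) (hC0 : C 0 = 1)
    (hCk : ∀ k : ℕ, 1 ≤ k → k ≤ m →
      C k = -((2 * ((m : ℝ) - k + 1) * (2 * ((m : ℝ) - k) + n)) /
        (2 * (k : ℝ) * (2 * (k : ℝ) - 1 + a))) * C (k - 1))
    (H : EuclideanSpace ℝ (Fin n) → ℝ → ℝ)
    (hH : ∀ (x : EuclideanSpace ℝ (Fin n)) (y : ℝ),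
      H x y = ∑ k ∈ range (m + 1), C k * y ^ (2 * k) * (∑ i, (x i) ^ 2) ^ (m - k)) :
    (∀ (x : EuclideanSpace ℝ (Fin n)) (y : ℝ), y ≠ 0 →
      (∑ i : Fin n,
          deriv (deriv (fun t : ℝ => H (x + t • EuclideanSpace.single i 1) y)) 0)
        + deriv (deriv (fun t : ℝ => H x t)) y
        + a / y * deriv (fun t : ℝ => H x t) y = 0) ∧
    (∀ (x : EuclideanSpace ℝ (Fin n)) (y : ℝ), H x (-y) = H x y) ∧
    (∀ x : EuclideanSpace ℝ (Fin n), (∑ i, (x i) ^ 2) = 1 → H x 0 = 1) := by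
  refine ⟨fun x y hy => ?_, fun x y => ?_, fun x hx => ?_⟩
  · set R := ∑ i, x i ^ 2
    have hHx : ∀ i, (fun t : ℝ => H (x + t • EuclideanSpace.single i 1) y) = fun t =>
        powSum (m + 1) (fun k => C k * (y ^ 2) ^ k) (fun k => m - k)
          (∑ j, (x + t • EuclideanSpace.single i 1 : EuclideanSpace ℝ (Fin n)) j ^ 2) :=
      fun i => funext fun t => by
        rw [hH, powSum]
        exact sum_congr rfl fun k _ => by ring
    have hHy : (fun t : ℝ => H x t) = fun t =>
        powSum (m + 1) (fun k => C k * R ^ (m - k)) (fun k => k) (t ^ 2) :=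
      funext fun t => by
        rw [hH, powSum]
        exact sum_congr rfl fun k _ => by ring
    rw [sum_congr rfl fun i _ => by rw [hHx i], hHy, add_assoc,
      sum_deriv_deriv_comp_sum_sq (hasDerivAt_powSum _ _ _) (hasDerivAt_powSum _ _ _),
      deriv_deriv_comp_sq_add_div_mul_deriv (hasDerivAt_powSum _ _ _) (hasDerivAt_powSum _ _ _)
        a hy,
      Fintype.card_fin, powSum_radialLaplacian, powSum_radialLaplacian, powSum, powSum]
    refine sum_range_succ_add_sum_range_succ_eq_zero (by simp) (by simp) fun k hk => ?_
    rw [Nat.sub_sub, Nat.add_sub_cancel]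
    linear_combination ((y ^ 2) ^ k * R ^ (m - (k + 1))) * coeff_pair_cancel ha.1 hCk hk
  · simp only [hH, (even_two_mul _).neg_pow]
  · rw [hH, hx, sum_eq_single 0 (fun k _ hk => by simp [hk]) (by simp), hC0]
    simp

/-- The `2m`-homogeneous polynomial `h_{2m}(x,y) = ∑_{k=0}^m C_k y^{2k} |x|^{2(m-k)}`
with `C₀ = 1`, `C_k = -((2(m-k+1)(2(m-k)+n))/(2k(2k-1+a))) C_{k-1}`, is
`Lₐ`-harmonic for `y ≠ 0` (i.e. `Δₓ h + ∂_{yy} h + (a/y) ∂_y h = 0`), even in `y`,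
and equals `1` on `{|x| = 1, y = 0}`. -/
theorem stmt5 (n m : ℕ) (hn : 1 ≤ n) (hm : 1 ≤ m) (a : ℝ) (ha : -1 < a ∧ a < 1)
    (C : ℕ → ℝ) (hC0 : C 0 = 1)
    (hCk : ∀ k : ℕ, 1 ≤ k → k ≤ m →
      C k = -((2 * ((m : ℝ) - k + 1) * (2 * ((m : ℝ) - k) + n)) /
        (2 * (k : ℝ) * (2 * (k : ℝ) - 1 + a))) * C (k - 1))
    (H : EuclideanSpace ℝ (Fin n) → ℝ → ℝ)
    (hH : ∀ (x : EuclideanSpace ℝ (Fin n)) (y : ℝ),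
      H x y = ∑ k ∈ range (m + 1), C k * y ^ (2 * k) * (∑ i, (x i) ^ 2) ^ (m - k)) :
    (∀ (x : EuclideanSpace ℝ (Fin n)) (y : ℝ), y ≠ 0 →
      (∑ i : Fin n,
          deriv (deriv (fun t : ℝ => H (x + t • EuclideanSpace.single i 1) y)) 0)
        + deriv (deriv (fun t : ℝ => H x t)) y
        + a / y * deriv (fun t : ℝ => H x t) y = 0) ∧
    (∀ (x : EuclideanSpace ℝ (Fin n)) (y : ℝ), H x (-y) = H x y) ∧
    (∀ x : EuclideanSpace ℝ (Fin n), (∑ i, (x i) ^ 2) = 1 → H x 0 = 1) :=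
  stmt5_general n m a ha C hC0 hCk H hH
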